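/- arXiv:0903.4756 — 10 statements merged into one kernel-verified Lean document; each statement's English description precedes it below -/
import Mathlib

section
/- Let L be a finite meet-semidistributive lattice in which the join of all atoms equals the largest element. Then the map f defined by f(x) = ⋁{p : p an atom of L, p ∧ x = 0} is a Banaschewski function on L; in particular L is complemented. -/
open scoped Classical

lemma meet_sup_bot {L : Type*} [Lattice L] [BoundedOrder L]
    (hsd : ∀ x y z : L, x ⊓ y = x ⊓ z → x ⊓ y = x ⊓ (y ⊔ z))
    (x : L) (s : Finset L) (h : ∀ a ∈ s, x ⊓ a = ⊥) : x ⊓ s.sup id = ⊥ := by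
  induction s using Finset.induction_on with
  | empty => simp
  | @insert a s ha ih =>
    rw [Finset.sup_insert]
    have h1 : x ⊓ a = ⊥ := h a (Finset.mem_insert_self a s)
    have h2 : x ⊓ s.sup id = ⊥ := ih (fun b hb => h b (Finset.mem_insert_of_mem hb))
    have := hsd x a (s.sup id) (h1.trans h2.symm)
    simpa [← this] using h1

/-- In a finite meet-semidistributive lattice whose atoms join to the top, the map
sending `x` to the join of the atoms disjoint from `x` is a Banaschewski function;
in particular the lattice is complemented. -/
theorem stmt_2 {L : Type*} [Fintype L] [Lattice L] [BoundedOrder L]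
    (hsd : ∀ x y z : L, x ⊓ y = x ⊓ z → x ⊓ y = x ⊓ (y ⊔ z))
    (hat : (Finset.univ.filter (fun p : L => IsAtom p)).sup id = ⊤) :
    (Antitone (fun x : L => (Finset.univ.filter (fun p : L => IsAtom p ∧ p ⊓ x = ⊥)).sup id)) ∧
    (∀ x : L, x ⊔ (Finset.univ.filter (fun p : L => IsAtom p ∧ p ⊓ x = ⊥)).sup id = ⊤) ∧
    (∀ x : L, x ⊓ (Finset.univ.filter (fun p : L => IsAtom p ∧ p ⊓ x = ⊥)).sup id = ⊥) ∧
    (∀ x : L, ∃ y : L, x ⊔ y = ⊤ ∧ x ⊓ y = ⊥) := by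
  have hjoin : ∀ x : L, x ⊔ (Finset.univ.filter (fun p : L => IsAtom p ∧ p ⊓ x = ⊥)).sup id = ⊤ := by
    intro x
    apply le_antisymm le_top
    rw [← hat]
    apply Finset.sup_le
    intro p hp
    simp only [Finset.mem_filter] at hp
    by_cases hd : p ⊓ x = ⊥
    · exact le_sup_of_le_right (Finset.le_sup (f := id)
        (by simp [Finset.mem_filter, hp.2, hd]))
    · have : p ⊓ x = p := by
        rcases (hp.2.le_iff.mp inf_le_left) with h | h
        · exact absurd h hd
        · exact h
      exact le_sup_of_le_left (by rw [← this]; exact inf_le_right)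
  have hmeet : ∀ x : L, x ⊓ (Finset.univ.filter (fun p : L => IsAtom p ∧ p ⊓ x = ⊥)).sup id = ⊥ := by
    intro x
    apply meet_sup_bot hsd
    intro a ha
    simp only [Finset.mem_filter] at ha
    rw [inf_comm]; exact ha.2.2
  refine ⟨?_, hjoin, hmeet, fun x => ⟨_, hjoin x, hmeet x⟩⟩
  intro a b hab
  apply Finset.sup_le
  intro p hp
  simp only [Finset.mem_filter] at hp
  apply Finset.le_sup (f := id)
  simp only [Finset.mem_filter, Finset.mem_univ, true_and]
  exact ⟨hp.2.1, le_bot_iff.mp (hp.2.2 ▸ inf_le_inf_left p hab)⟩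
end

section
/- Let R be a unital von Neumann regular ring and X ⊆ R. If there is a partial Banaschewski function on the set {xR : x ∈ X} in the lattice L(R) of principal right ideals, then there is a partial Banaschewski function on X in R, and conversely. -/
/-- The principal right ideal `xR` of a unital ring, as a set. -/
def pR {R : Type*} [Ring R] (x : R) : Set R := {z | ∃ r : R, z = x * r}

lemma pR_self {R : Type*} [Ring R] (x : R) : x ∈ pR x := ⟨1, (mul_one x).symm⟩

lemma pR_mul {R : Type*} [Ring R] {x z : R} (hz : z ∈ pR x) (t : R) :
    z * t ∈ pR x := by
  obtain ⟨r, rfl⟩ := hz; exact ⟨r * t, mul_assoc x r t⟩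

lemma pR_sub {R : Type*} [Ring R] {x a b : R} (ha : a ∈ pR x) (hb : b ∈ pR x) :
    a - b ∈ pR x := by
  obtain ⟨r, rfl⟩ := ha; obtain ⟨s, rfl⟩ := hb
  exact ⟨r - s, by rw [mul_sub]⟩

lemma pR_zero {R : Type*} [Ring R] (x : R) : (0 : R) ∈ pR x := ⟨0, (mul_zero x).symm⟩

lemma pR_subset_of_mem {R : Type*} [Ring R] {x e : R} (he : e ∈ pR x) :
    pR e ⊆ pR x := by
  rintro s ⟨t, rfl⟩; exact pR_mul he t

/-- For a unital von Neumann regular ring `R` and `X ⊆ R`, there is a partial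
Banaschewski function on `{xR : x ∈ X}` in the lattice of principal right ideals
iff there is a partial Banaschewski function on `X` in `R`. -/
theorem stmt_5 {R : Type*} [Ring R] (hreg : ∀ x : R, ∃ y : R, x * y * x = x)
    (X : Set R) :
    (∃ φ : Set R → Set R,
      (∀ x ∈ X, ∃ c : R, φ (pR x) = pR c) ∧
      (∀ x ∈ X, (∀ s : R, ∃ a ∈ pR x, ∃ b ∈ φ (pR x), s = a + b) ∧
        (∀ s : R, s ∈ pR x → s ∈ φ (pR x) → s = 0)) ∧
      (∀ x ∈ X, ∀ y ∈ X, pR x ⊆ pR y → φ (pR y) ⊆ φ (pR x)))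
    ↔
    (∃ f : R → R,
      (∀ x ∈ X, f x * f x = f x ∧ pR x = pR (f x)) ∧
      (∀ x ∈ X, ∀ y ∈ X, pR x ⊆ pR y → f x = f x * f y ∧ f x = f y * f x)) := by
  classical
  constructor
  · rintro ⟨φ, hc, hsum, hanti⟩
    -- For each x ∈ X there is an idempotent e with 1 - e ∈ φ (pR x),
    -- e acting as identity on pR x, as zero on φ (pR x), and pR x = pR e.
    have key : ∀ x, x ∈ X → ∃ e : R, (1 - e ∈ φ (pR x)) ∧
        (∀ s ∈ pR x, e * s = s) ∧ (∀ s ∈ φ (pR x), e * s = 0) ∧ pR x = pR e := by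
      intro x hx
      obtain ⟨c, hcx⟩ := hc x hx
      obtain ⟨a, ha, b, hb, h1⟩ := (hsum x hx).1 1
      have uniq : ∀ p p' q q' : R, p ∈ pR x → p' ∈ pR x → q ∈ φ (pR x) →
          q' ∈ φ (pR x) → p + q = p' + q' → p = p' := by
        intro p p' q q' hp hp' hq hq' heq
        have hm : p - p' = q' - q := by
          rw [sub_eq_sub_iff_add_eq_add, add_comm q' p']; exact heq
        have hA : p - p' ∈ pR x := pR_sub hp hp'
        have hB : p - p' ∈ φ (pR x) := by
          rw [hm, hcx]; rw [hcx] at hq hq'; exact pR_sub hq' hq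
        exact sub_eq_zero.mp ((hsum x hx).2 _ hA hB)
      have hid : ∀ s ∈ pR x, a * s = s := by
        intro s hs
        have hdec : a * s + b * s = s + 0 := by
          have h2 : (a + b) * s = s := by rw [← h1, one_mul]
          rw [add_mul] at h2; rw [h2, add_zero]
        exact uniq _ _ _ _ (pR_mul ha s) hs
          (by rw [hcx]; rw [hcx] at hb; exact pR_mul hb s)
          (by rw [hcx]; exact pR_zero c) hdec
      have hzero : ∀ s ∈ φ (pR x), a * s = 0 := by
        intro s hs
        have hdec : a * s + b * s = 0 + s := by
          have h2 : (a + b) * s = s := by rw [← h1, one_mul]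
          rw [add_mul] at h2; rw [h2, zero_add]
        exact uniq _ _ _ _ (pR_mul ha s) (pR_zero x)
          (by rw [hcx]; rw [hcx] at hb; exact pR_mul hb s) hs hdec
      refine ⟨a, ?_, hid, hzero, ?_⟩
      · have hb1 : b = 1 - a := by
          have : a + b = 1 := h1.symm
          rw [← this]; abel
        rwa [← hb1]
      · apply Set.Subset.antisymm
        · intro s hs
          exact (hid s hs) ▸ pR_mul (pR_self a) s
        · exact pR_subset_of_mem ha
    choose F hF using key
    refine ⟨fun x => if h : x ∈ X then F x h else 0, ?_, ?_⟩
    · intro x hx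
      simp only [dif_pos hx]
      have hmem : F x hx ∈ pR x := by
        rw [(hF x hx).2.2.2]; exact pR_self _
      exact ⟨(hF x hx).2.1 _ hmem, (hF x hx).2.2.2⟩
    · intro x hx y hy hxy
      simp only [dif_pos hx, dif_pos hy]
      constructor
      · -- F x = F x * F y, since F x annihilates 1 - F y ∈ φ (pR x)
        have h1e : (1 : R) - F y hy ∈ φ (pR x) :=
          hanti x hx y hy hxy (hF y hy).1
        have := (hF x hx).2.2.1 _ h1e
        rw [mul_sub, mul_one, sub_eq_zero] at this
        exact this
      · -- F x = F y * F x, since F x ∈ pR x ⊆ pR y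
        have hmem : F x hx ∈ pR y := by
          apply hxy; rw [(hF x hx).2.2.2]; exact pR_self _
        exact ((hF y hy).2.1 _ hmem).symm
  · rintro ⟨f, h1, h2⟩
    -- f is constant on fibers of pR within X
    have hconst : ∀ x, x ∈ X → ∀ y, y ∈ X → pR x = pR y → f x = f y := by
      intro x hx y hy hxy
      have hA := (h2 x hx y hy hxy.le).1
      have hB := (h2 y hy x hx hxy.ge).2
      rw [hA, ← hB]
    refine ⟨fun S => if h : ∃ x, x ∈ X ∧ pR x = S then pR (1 - f h.choose) else ∅,
      ?_, ?_, ?_⟩ <;> intro x hx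
    all_goals
      have hex : ∃ x', x' ∈ X ∧ pR x' = pR x := ⟨x, hx, rfl⟩
      have hfeq : f hex.choose = f x :=
        hconst _ hex.choose_spec.1 x hx hex.choose_spec.2
      have hval : (if h : ∃ x', x' ∈ X ∧ pR x' = pR x then
          pR (1 - f h.choose) else ∅) = pR (1 - f x) := by
        rw [dif_pos hex, hfeq]
    · exact ⟨1 - f x, hval⟩
    · obtain ⟨hidem, hpr⟩ := h1 x hx
      constructor
      · intro s
        refine ⟨f x * s, ?_, (1 - f x) * s, ?_, ?_⟩
        · rw [hpr]; exact pR_mul (pR_self _) s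
        · beta_reduce; rw [hval]; exact pR_mul (pR_self _) s
        · rw [sub_mul, one_mul]; abel
      · intro s hs1 hs2
        rw [hpr] at hs1
        beta_reduce at hs2; rw [hval] at hs2
        obtain ⟨r, rfl⟩ := hs1
        obtain ⟨t, ht⟩ := hs2
        have : f x * (f x * r) = f x * r := by rw [← mul_assoc, hidem]
        rw [ht, ← mul_assoc, mul_sub, mul_one, hidem, sub_self, zero_mul] at this
        rw [ht]
        exact this.symm
    · intro y hy hxy
      have hexy : ∃ x', x' ∈ X ∧ pR x' = pR y := ⟨y, hy, rfl⟩
      have hfeqy : f hexy.choose = f y :=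
        hconst _ hexy.choose_spec.1 y hy hexy.choose_spec.2
      have hvaly : (if h : ∃ x', x' ∈ X ∧ pR x' = pR y then
          pR (1 - f h.choose) else ∅) = pR (1 - f y) := by
        rw [dif_pos hexy, hfeqy]
      beta_reduce; rw [hval, hvaly]
      rintro s ⟨t, rfl⟩
      refine ⟨(1 - f y) * t, ?_⟩
      have hee : f x = f x * f y := (h2 x hx y hy hxy).1
      have : (1 - f x) * (1 - f y) = 1 - f y := by
        rw [sub_mul, one_mul, mul_sub, mul_one, ← hee, sub_self, sub_zero]
      rw [← mul_assoc, this]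
end

section
/- Let L be a complemented modular lattice, let u = (u_0, …, u_{n−1}) be a finite independent sequence with ⋁_{i<n} u_i = 1, and let x ∈ L. Define u_{<k} = ⋁_{i<k} u_i, F_u(x) = {k < n : u_k ≰ x ∨ u_{<k}}, and f_u(x) = ⋁{u_k : k ∈ F_u(x)}. Then x ∨ f_u(x) = 1. -/
open scoped Classical

/-- In a complemented modular lattice, `x ⊔ f_u(x) = ⊤` for every independent
sequence `u` with join `⊤`. -/
theorem stmt_6 {L : Type*} [Lattice L] [BoundedOrder L] [IsModularLattice L]
    [ComplementedLattice L] {n : ℕ} (u : ℕ → L)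
    (hind : ∀ k < n, u k ⊓ (Finset.range k).sup u = ⊥)
    (hjoin : (Finset.range n).sup u = ⊤) (x : L) :
    x ⊔ ((Finset.range n).filter (fun k => ¬ u k ≤ x ⊔ (Finset.range k).sup u)).sup u = ⊤ := by
  set f := ((Finset.range n).filter (fun k => ¬ u k ≤ x ⊔ (Finset.range k).sup u)).sup u with hf
  have key : ∀ k ≤ n, (Finset.range k).sup u ≤ x ⊔ f := by
    intro k hk
    induction k with
    | zero => simp
    | succ m ih =>
      have hm : m < n := hk
      have ihm := ih (le_of_lt hm)
      rw [Finset.range_add_one, Finset.sup_insert]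
      refine sup_le ?_ ihm
      by_cases h : u m ≤ x ⊔ (Finset.range m).sup u
      · calc u m ≤ x ⊔ (Finset.range m).sup u := h
          _ ≤ x ⊔ (x ⊔ f) := sup_le_sup_left ihm x
          _ = x ⊔ f := by rw [← sup_assoc, sup_idem]
      · have : m ∈ (Finset.range n).filter (fun k => ¬ u k ≤ x ⊔ (Finset.range k).sup u) :=
          Finset.mem_filter.2 ⟨Finset.mem_range.2 hm, h⟩
        exact le_trans (Finset.le_sup this) le_sup_right
  have := key n le_rfl
  rw [hjoin] at this
  exact le_antisymm le_top this
end

section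
/- Let L be a complemented modular lattice, let u = (u_0, …, u_{n−1}) be independent with join 1, and let x ∈ L. Define u_{<k} = ⋁_{i<k} u_i, G_u(x) = {k < n : u_k ∧ (x ∨ u_{<k}) = 0}, and g_u(x) = ⋁{u_k : k ∈ G_u(x)}. Then x ∧ g_u(x) = 0. -/
open scoped Classical

private lemma aux_inf_sup {L : Type*} [Lattice L] [OrderBot L] [IsModularLattice L]
    {a b c : L} (hab : a ⊓ b = ⊥) (hc : (a ⊔ b) ⊓ c = ⊥) : a ⊓ (b ⊔ c) = ⊥ := by
  have h1 : (b ⊔ c) ⊓ (a ⊔ b) = b := by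
    rw [sup_inf_assoc_of_le c (le_sup_right : b ≤ a ⊔ b), inf_comm c (a ⊔ b), hc, sup_bot_eq]
  have h2 : a ⊓ (b ⊔ c) = a ⊓ ((b ⊔ c) ⊓ (a ⊔ b)) := by
    rw [inf_comm (b ⊔ c) (a ⊔ b), ← inf_assoc, inf_eq_left.mpr (le_sup_left : a ≤ a ⊔ b)]
  rw [h2, h1, hab]

/-- In a complemented modular lattice, `x ⊓ g_u(x) = ⊥` for every independent
sequence `u` with join `⊤`. -/
theorem stmt_7 {L : Type*} [Lattice L] [BoundedOrder L] [IsModularLattice L]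
    [ComplementedLattice L] {n : ℕ} (u : ℕ → L)
    (hind : ∀ k < n, u k ⊓ (Finset.range k).sup u = ⊥)
    (hjoin : (Finset.range n).sup u = ⊤) (x : L) :
    x ⊓ ((Finset.range n).filter (fun k => u k ⊓ (x ⊔ (Finset.range k).sup u) = ⊥)).sup u = ⊥ := by
  have key : ∀ m, x ⊓ ((Finset.range m).filter
      (fun k => u k ⊓ (x ⊔ (Finset.range k).sup u) = ⊥)).sup u = ⊥ := by
    intro m
    induction m with
    | zero => simp
    | succ m ih =>
      rw [Finset.range_add_one, Finset.filter_insert]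
      by_cases hP : u m ⊓ (x ⊔ (Finset.range m).sup u) = ⊥
      · rw [if_pos hP, Finset.sup_insert, sup_comm]
        set b := ((Finset.range m).filter
          (fun k => u k ⊓ (x ⊔ (Finset.range k).sup u) = ⊥)).sup u with hb
        have hble : b ≤ (Finset.range m).sup u :=
          Finset.sup_mono (Finset.filter_subset _ _)
        refine aux_inf_sup ih ?_
        have : (x ⊔ b) ⊓ u m ≤ (x ⊔ (Finset.range m).sup u) ⊓ u m :=
          inf_le_inf_right _ (sup_le_sup_left hble x)
        rw [inf_comm] at hP
        exact le_bot_iff.mp (hP ▸ this)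
      · rw [if_neg hP]; exact ih
  exact key n
end

section
/- Let L be a complemented modular lattice, let u = (u_0,…,u_{n−1}) be independent with join 1, and let x ∈ L. Define v_{2k} = u_k ∧ (x ∨ u_{<k}) and choose v_{2k+1} with u_k = v_{2k} ⊕ v_{2k+1}. Then the sequence v = (v_0, …, v_{2n−1}) is independent with join 1, refines u (via the map l ↦ ⌊l/2⌋), and decides x, i.e., F_v(x) ⊆ G_v(x). -/
open scoped Classical

/-- Given an independent sequence `u` with join `⊤` in a complemented modular lattice
and `x ∈ L`, the refinement `v` defined by `v (2k) = u k ⊓ (x ⊔ u_{<k})` and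
`u k = v (2k) ⊕ v (2k+1)` is independent with join `⊤`, refines `u` via `l ↦ l / 2`,
and decides `x` (that is, `F_v(x) ⊆ G_v(x)`). -/
theorem stmt_9 {L : Type*} [Lattice L] [BoundedOrder L] [IsModularLattice L]
    [ComplementedLattice L] {n : ℕ} (u : ℕ → L)
    (hind : ∀ k < n, u k ⊓ (Finset.range k).sup u = ⊥)
    (hjoin : (Finset.range n).sup u = ⊤) (x : L)
    (v : ℕ → L)
    (hveven : ∀ k < n, v (2 * k) = u k ⊓ (x ⊔ (Finset.range k).sup u))
    (hvodd : ∀ k < n, v (2 * k) ⊔ v (2 * k + 1) = u k ∧ v (2 * k) ⊓ v (2 * k + 1) = ⊥) :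
    (∀ l < 2 * n, v l ⊓ (Finset.range l).sup v = ⊥) ∧
    ((Finset.range (2 * n)).sup v = ⊤) ∧
    (∀ k < n, u k = ((Finset.range (2 * n)).filter (fun l => l / 2 = k)).sup v) ∧
    (∀ l < 2 * n, ¬ v l ≤ x ⊔ (Finset.range l).sup v →
      v l ⊓ (x ⊔ (Finset.range l).sup v) = ⊥) := by
  -- Partial sups of v at even indices equal partial sups of u
  have hkey : ∀ k, k ≤ n → (Finset.range (2 * k)).sup v = (Finset.range k).sup u := by
    intro k hk
    induction k with
    | zero => simp
    | succ k ih =>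
      have hk' : k < n := hk
      have h1 := (hvodd k hk').1
      have e : 2 * (k + 1) = (2 * k + 1) + 1 := by ring
      rw [e, Finset.range_add_one, Finset.sup_insert, Finset.range_add_one, Finset.sup_insert,
        Finset.range_add_one, Finset.sup_insert,
        ih hk'.le, ← sup_assoc, sup_comm (v (2 * k + 1)) (v (2 * k)), h1]
  have hodd : ∀ k, k < n →
      (Finset.range (2 * k + 1)).sup v = v (2 * k) ⊔ (Finset.range k).sup u := by
    intro k hk
    rw [Finset.range_add_one, Finset.sup_insert, hkey k hk.le]
  have hvle : ∀ k < n, v (2 * k) ≤ u k := fun k hk => (hveven k hk) ▸ inf_le_left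
  have hv1le : ∀ k < n, v (2 * k + 1) ≤ u k := fun k hk =>
    (hvodd k hk).1 ▸ le_sup_right
  refine ⟨?_, ?_, ?_, ?_⟩
  · intro l hl
    obtain ⟨k, rfl | rfl⟩ : ∃ k, l = 2 * k ∨ l = 2 * k + 1 := ⟨l / 2, by omega⟩
    · have hk : k < n := by omega
      rw [hkey k hk.le]
      exact le_bot_iff.mp (le_trans (inf_le_inf_right _ (hvle k hk)) (hind k hk).le)
    · have hk : k < n := by omega
      rw [hodd k hk]
      -- v(2k+1) ⊓ (v(2k) ⊔ U_k) = v(2k+1) ⊓ ((v(2k) ⊔ U_k) ⊓ u k) = v(2k+1) ⊓ v(2k) = ⊥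
      have hmod : (v (2 * k) ⊔ (Finset.range k).sup u) ⊓ u k = v (2 * k) := by
        rw [sup_inf_assoc_of_le _ (hvle k hk), inf_comm ((Finset.range k).sup u), hind k hk,
          sup_bot_eq]
      have : v (2 * k + 1) ⊓ (v (2 * k) ⊔ (Finset.range k).sup u)
          ≤ v (2 * k + 1) ⊓ v (2 * k) := by
        refine le_inf inf_le_left ?_
        calc v (2 * k + 1) ⊓ (v (2 * k) ⊔ (Finset.range k).sup u)
            ≤ u k ⊓ (v (2 * k) ⊔ (Finset.range k).sup u) :=
              inf_le_inf_right _ (hv1le k hk)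
          _ = v (2 * k) := by rw [inf_comm]; exact hmod
      exact le_bot_iff.mp (this.trans (inf_comm (v (2*k)) (v (2*k+1)) ▸ (hvodd k hk).2.le))
  · rw [hkey n le_rfl, hjoin]
  · intro k hk
    have hfilter : (Finset.range (2 * n)).filter (fun l => l / 2 = k) = {2 * k, 2 * k + 1} := by
      ext l
      simp only [Finset.mem_filter, Finset.mem_range, Finset.mem_insert, Finset.mem_singleton]
      omega
    rw [hfilter]
    simp only [Finset.sup_insert, Finset.sup_singleton]
    exact ((hvodd k hk).1).symm
  · intro l hl hne
    obtain ⟨k, rfl | rfl⟩ : ∃ k, l = 2 * k ∨ l = 2 * k + 1 := ⟨l / 2, by omega⟩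
    · have hk : k < n := by omega
      exact absurd (by rw [hkey k hk.le, hveven k hk]; exact inf_le_right) hne
    · have hk : k < n := by omega
      rw [hodd k hk]
      have hx : x ⊔ (v (2 * k) ⊔ (Finset.range k).sup u) = x ⊔ (Finset.range k).sup u := by
        have : v (2 * k) ≤ x ⊔ (Finset.range k).sup u := by
          rw [hveven k hk]; exact inf_le_right
        rw [← sup_assoc, sup_comm x (v (2*k)), sup_assoc, sup_eq_right.mpr]
        exact this
      rw [hx]
      have h1 : v (2 * k + 1) ⊓ (x ⊔ (Finset.range k).sup u) ≤ v (2 * k) := by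
        rw [hveven k hk]
        exact le_inf (inf_le_left.trans (hv1le k hk)) inf_le_right
      have h2 : v (2 * k + 1) ⊓ (x ⊔ (Finset.range k).sup u)
          ≤ v (2 * k) ⊓ v (2 * k + 1) := le_inf h1 inf_le_left
      exact le_bot_iff.mp (h2.trans (hvodd k hk).2.le)
end

section
/- Let L be a complemented modular lattice, let u and v be finite independent sequences with join 1 such that v refines u via an isotone surjection φ, and let x ∈ L. Then: (a) φ(F_v(x)) ⊆ F_u(x); (b) φ⁻¹(G_u(x)) ⊆ G_v(x); (c) f_v(x) ≤ f_u(x); (d) g_u(x) ≤ g_v(x); (e) if u decides x then v decides x and f_u(x) = f_v(x). -/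
open scoped Classical

/-- Behaviour of `F`, `G`, `f`, `g` under refinement of independent sequences with
join `⊤` in a complemented modular lattice. -/
theorem stmt_10 {L : Type*} [Lattice L] [BoundedOrder L] [IsModularLattice L]
    [ComplementedLattice L] {m m' : ℕ} (u v : ℕ → L)
    (hindu : ∀ k < m, u k ⊓ (Finset.range k).sup u = ⊥)
    (hjoinu : (Finset.range m).sup u = ⊤)
    (hindv : ∀ l < m', v l ⊓ (Finset.range l).sup v = ⊥)
    (hjoinv : (Finset.range m').sup v = ⊤)
    (φ : ℕ → ℕ)
    (hφmap : ∀ l < m', φ l < m)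
    (hφiso : ∀ l l' : ℕ, l ≤ l' → l' < m' → φ l ≤ φ l')
    (hφsurj : ∀ k < m, ∃ l < m', φ l = k)
    (href : ∀ k < m, u k = ((Finset.range m').filter (fun l => φ l = k)).sup v)
    (x : L) :
    (∀ l < m', ¬ v l ≤ x ⊔ (Finset.range l).sup v →
        ¬ u (φ l) ≤ x ⊔ (Finset.range (φ l)).sup u) ∧
    (∀ l < m', u (φ l) ⊓ (x ⊔ (Finset.range (φ l)).sup u) = ⊥ →
        v l ⊓ (x ⊔ (Finset.range l).sup v) = ⊥) ∧
    (((Finset.range m').filter (fun l => ¬ v l ≤ x ⊔ (Finset.range l).sup v)).sup v ≤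
      ((Finset.range m).filter (fun k => ¬ u k ≤ x ⊔ (Finset.range k).sup u)).sup u) ∧
    (((Finset.range m).filter (fun k => u k ⊓ (x ⊔ (Finset.range k).sup u) = ⊥)).sup u ≤
      ((Finset.range m').filter (fun l => v l ⊓ (x ⊔ (Finset.range l).sup v) = ⊥)).sup v) ∧
    ((∀ k < m, ¬ u k ≤ x ⊔ (Finset.range k).sup u →
        u k ⊓ (x ⊔ (Finset.range k).sup u) = ⊥) →
      ((∀ l < m', ¬ v l ≤ x ⊔ (Finset.range l).sup v →
          v l ⊓ (x ⊔ (Finset.range l).sup v) = ⊥) ∧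
        ((Finset.range m).filter (fun k => ¬ u k ≤ x ⊔ (Finset.range k).sup u)).sup u =
          ((Finset.range m').filter (fun l => ¬ v l ≤ x ⊔ (Finset.range l).sup v)).sup v)) := by
  -- v l ≤ u (φ l)
  have hvu : ∀ l < m', v l ≤ u (φ l) := by
    intro l hl
    rw [href (φ l) (hφmap l hl)]
    exact Finset.le_sup (by simp [hl])
  -- Su (φ l) ≤ Sv l
  have hSuSv : ∀ l < m', (Finset.range (φ l)).sup u ≤ (Finset.range l).sup v := by
    intro l hl
    apply Finset.sup_le
    intro k hk
    rw [Finset.mem_range] at hk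
    rw [href k (hk.trans (hφmap l hl))]
    apply Finset.sup_le
    intro l' hl'
    simp only [Finset.mem_filter, Finset.mem_range] at hl'
    have hll : l' < l := by
      by_contra h
      push_neg at h
      exact absurd (hl'.2 ▸ hφiso l l' h hl'.1) (not_le.2 hk)
    exact Finset.le_sup (Finset.mem_range.2 hll)
  -- part (a)
  have partA : ∀ l < m', ¬ v l ≤ x ⊔ (Finset.range l).sup v →
      ¬ u (φ l) ≤ x ⊔ (Finset.range (φ l)).sup u := by
    intro l hl hnv hu
    exact hnv ((hvu l hl).trans (hu.trans (sup_le_sup_left (hSuSv l hl) x)))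
  -- part (b)
  have partB : ∀ l < m', u (φ l) ⊓ (x ⊔ (Finset.range (φ l)).sup u) = ⊥ →
      v l ⊓ (x ⊔ (Finset.range l).sup v) = ⊥ := by
    intro l hl hG
    set b := ((Finset.range l).filter (fun l' => φ l' = φ l)).sup v with hb
    have hbu : b ≤ u (φ l) := by
      rw [href (φ l) (hφmap l hl)]
      apply Finset.sup_le
      intro l' hl'
      simp only [Finset.mem_filter, Finset.mem_range] at hl'
      exact Finset.le_sup (by simp [hl'.1.trans hl, hl'.2])
    have hbv : b ≤ (Finset.range l).sup v :=
      Finset.sup_le fun l' hl' => Finset.le_sup (Finset.filter_subset _ _ hl')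
    have hSv : (Finset.range l).sup v ≤ (Finset.range (φ l)).sup u ⊔ b := by
      apply Finset.sup_le
      intro l' hl'
      rw [Finset.mem_range] at hl'
      rcases lt_or_eq_of_le (hφiso l' l hl'.le hl) with h | h
      · exact le_sup_of_le_left <| (hvu l' (hl'.trans hl)).trans
          (Finset.le_sup (Finset.mem_range.2 h))
      · exact le_sup_of_le_right <| Finset.le_sup (by simp [hl', h])
    have key : v l ⊓ (x ⊔ (Finset.range l).sup v) ≤ b := by
      calc v l ⊓ (x ⊔ (Finset.range l).sup v)
          ≤ u (φ l) ⊓ (x ⊔ ((Finset.range (φ l)).sup u ⊔ b)) :=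
            inf_le_inf (hvu l hl) (sup_le_sup_left hSv x)
        _ = u (φ l) ⊓ ((x ⊔ (Finset.range (φ l)).sup u) ⊔ b) := by rw [sup_assoc]
        _ = u (φ l) ⊓ (x ⊔ (Finset.range (φ l)).sup u) ⊔ b := by
            rw [inf_sup_assoc_of_le _ hbu]
        _ = b := by rw [hG, bot_sup_eq]
    have : v l ⊓ (x ⊔ (Finset.range l).sup v) ≤ v l ⊓ (Finset.range l).sup v :=
      le_inf inf_le_left (key.trans hbv)
    exact le_bot_iff.1 (this.trans_eq (hindv l hl))
  refine ⟨partA, partB, ?_, ?_, ?_⟩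
  · -- part (c)
    apply Finset.sup_le
    intro l hl
    simp only [Finset.mem_filter, Finset.mem_range] at hl
    exact (hvu l hl.1).trans (Finset.le_sup (by
      simp only [Finset.mem_filter, Finset.mem_range]
      exact ⟨hφmap l hl.1, partA l hl.1 hl.2⟩))
  · -- part (d)
    apply Finset.sup_le
    intro k hk
    simp only [Finset.mem_filter, Finset.mem_range] at hk
    rw [href k hk.1]
    apply Finset.sup_le
    intro l hl
    simp only [Finset.mem_filter, Finset.mem_range] at hl
    refine Finset.le_sup (Finset.mem_filter.2 ⟨Finset.mem_range.2 hl.1, ?_⟩)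
    exact partB l hl.1 (hl.2 ▸ hk.2)
  · -- part (e)
    intro hdec
    have hvdec : ∀ l < m', ¬ v l ≤ x ⊔ (Finset.range l).sup v →
        v l ⊓ (x ⊔ (Finset.range l).sup v) = ⊥ := fun l hl hF =>
      partB l hl (hdec (φ l) (hφmap l hl) (partA l hl hF))
    refine ⟨hvdec, le_antisymm ?_ ?_⟩
    · -- f_u ≤ f_v
      apply Finset.sup_le
      intro k hk
      simp only [Finset.mem_filter, Finset.mem_range] at hk
      rw [href k hk.1]
      apply Finset.sup_le
      intro l hl
      simp only [Finset.mem_filter, Finset.mem_range] at hl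
      by_cases hF : v l ≤ x ⊔ (Finset.range l).sup v
      · have : v l = ⊥ := by
          have := partB l hl.1 (hl.2 ▸ hdec k hk.1 hk.2)
          rwa [inf_eq_left.2 hF] at this
        simp [this]
      · exact Finset.le_sup (Finset.mem_filter.2 ⟨Finset.mem_range.2 hl.1, hF⟩)
    · -- f_v ≤ f_u (same as part c)
      apply Finset.sup_le
      intro l hl
      simp only [Finset.mem_filter, Finset.mem_range] at hl
      exact (hvu l hl.1).trans (Finset.le_sup (by
        simp only [Finset.mem_filter, Finset.mem_range]
        exact ⟨hφmap l hl.1, partA l hl.1 hl.2⟩))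
end

section
/- Every countable complemented modular lattice has a Banaschewski function whose range is a Boolean sublattice (with the same bounds). -/
/-!
Enumerate `L` as `e 0, e 1, …` and keep a finite list of independent pieces with join `⊤`.
By modularity, `S ↦ ⨆ i ∈ S, pᵢ` is a lattice homomorphism out of a power set, so the joins of
subfamilies of the pieces form a Boolean sublattice. At stage `n` a complement of `a = e n` is built
greedily: walking along the pieces, with `w` the join of the parts chosen so far, choose in the
piece `p` a complement `g` of `(w ⊔ a) ⊓ p` relative to `p`. Splitting every `p` into `g` and
`(w ⊔ a) ⊓ p` keeps all earlier values joins of pieces.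

Greediness makes the assignment antitone. If `x ≤ a`, every piece dropped by the value at `x` lies
below `w ⊔ a`, so there `g = ⊥`; if `a ≤ x`, every piece kept by the value at `x` is disjoint from
`w ⊔ a`, so there `g = p`. Finally the range is the whole union of the Boolean algebras of the
stages: if `y` is a join of pieces and `z` the join of the other pieces, the value at `z` is a join
of pieces at a later stage, and complements of `z` are unique in that distributive sublattice.
-/

open Set Filter

lemma Disjoint.sup_inf_eq_inf_of_le {L : Type*} [Lattice L] [OrderBot L] [IsModularLattice L]
    {p r x y : L} (hpr : Disjoint p r) (hx : x ≤ r) (hy : y ≤ r) : (p ⊔ x) ⊓ y = x ⊓ y := by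
  have hxr : (p ⊔ x) ⊓ r = x := by
    rw [sup_comm, sup_inf_assoc_of_le p hx, hpr.eq_bot, sup_bot_eq]
  refine le_antisymm (le_inf ?_ inf_le_right) (inf_le_inf_right _ le_sup_right)
  exact (inf_le_inf_left _ hy).trans hxr.le

namespace LatticeHom

variable {α β : Type*} [DistribLattice α] [Lattice β] (φ : LatticeHom α β) {x y z : β}

lemma inf_sup_left_of_mem_range (hx : x ∈ range φ) (hy : y ∈ range φ) (hz : z ∈ range φ) :
    x ⊓ (y ⊔ z) = x ⊓ y ⊔ x ⊓ z := by
  obtain ⟨a, rfl⟩ := hx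
  obtain ⟨b, rfl⟩ := hy
  obtain ⟨c, rfl⟩ := hz
  simpa using congrArg φ (inf_sup_left a b c)

lemma eq_of_isCompl_of_mem_range [BoundedOrder β] (hx : x ∈ range φ) (hy : y ∈ range φ)
    (hz : z ∈ range φ) (hxy : IsCompl x y) (hxz : IsCompl x z) : y = z := by
  have key : ∀ {y z : β}, y ∈ range φ → z ∈ range φ → IsCompl x y → IsCompl x z → y ≤ z := by
    intro y z hy hz hxy hxz
    calc y = y ⊓ (x ⊔ z) := by rw [hxz.sup_eq_top, inf_top_eq]
      _ = y ⊓ x ⊔ y ⊓ z := φ.inf_sup_left_of_mem_range hy hx hz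
      _ = y ⊓ z := by rw [hxy.symm.inf_eq_bot, bot_sup_eq]
      _ ≤ z := inf_le_right
  exact le_antisymm (key hy hz hxy hxz) (key hz hy hxz hxy)

end LatticeHom

namespace CountableBanaschewski

section Selection

variable {L : Type*} [Lattice L] [OrderBot L]

def listSup (P : List L) : L := P.foldr (· ⊔ ·) ⊥

@[simp] lemma listSup_nil : listSup ([] : List L) = ⊥ := rfl

@[simp] lemma listSup_cons (p : L) (P : List L) : listSup (p :: P) = p ⊔ listSup P := rfl

/-- `IndepOver P ⊥` says that the pieces `P` are independent; in the recursion `s` is the join of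
the pieces already passed. -/
def IndepOver : List L → L → Prop
  | [], _ => True
  | p :: P, s => Disjoint p (s ⊔ listSup P) ∧ IndepOver P (s ⊔ p)

lemma IndepOver.mono {P : List L} {s t : L} (h : IndepOver P s) (hts : t ≤ s) :
    IndepOver P t := by
  induction P generalizing s t with
  | nil => trivial
  | cons p P ih => exact ⟨h.1.mono_right (sup_le_sup_right hts _), ih h.2 (sup_le_sup_right hts _)⟩

open scoped Classical in
noncomputable def select : List L → Set ℕ → L
  | [], _ => ⊥
  | p :: P, S => (if 0 ∈ S then p else ⊥) ⊔ select P ((· + 1) ⁻¹' S)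

@[simp] lemma select_nil (S : Set ℕ) : select ([] : List L) S = ⊥ := rfl

lemma select_cons_of_mem {p : L} {P : List L} {S : Set ℕ} (h : 0 ∈ S) :
    select (p :: P) S = p ⊔ select P ((· + 1) ⁻¹' S) := by
  simp [select, h]

lemma select_cons_of_notMem {p : L} {P : List L} {S : Set ℕ} (h : 0 ∉ S) :
    select (p :: P) S = select P ((· + 1) ⁻¹' S) := by
  simp [select, h]

lemma select_univ (P : List L) : select P univ = listSup P := by
  induction P with
  | nil => rfl
  | cons p P ih => rw [select_cons_of_mem (mem_univ 0), preimage_univ, ih, listSup_cons]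

lemma select_empty (P : List L) : select P ∅ = ⊥ := by
  induction P with
  | nil => rfl
  | cons p P ih => rw [select_cons_of_notMem (notMem_empty 0), preimage_empty, ih]

lemma select_union (P : List L) (S T : Set ℕ) : select P (S ∪ T) = select P S ⊔ select P T := by
  induction P generalizing S T with
  | nil => simp
  | cons p P ih =>
    by_cases hS : 0 ∈ S <;> by_cases hT : 0 ∈ T <;>
      simp [select, preimage_union, ih, hS, hT, sup_sup_distrib_left, sup_comm]

lemma select_le_listSup (P : List L) (S : Set ℕ) : select P S ≤ listSup P := by
  rw [← select_univ, ← union_univ S, select_union]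
  exact le_sup_left

variable [IsModularLattice L]

lemma IndepOver.select_inter {P : List L} {s : L} (h : IndepOver P s) (S T : Set ℕ) :
    select P (S ∩ T) = select P S ⊓ select P T := by
  induction P generalizing s S T with
  | nil => simp
  | cons p P ih =>
    have hp : Disjoint p (listSup P) := h.1.mono_right le_sup_right
    have hS := select_le_listSup P ((· + 1) ⁻¹' S)
    have hT := select_le_listSup P ((· + 1) ⁻¹' T)
    by_cases hS0 : 0 ∈ S <;> by_cases hT0 : 0 ∈ T <;>
      simp only [select, mem_inter_iff, preimage_inter, ih h.2, hS0, hT0, and_true, and_false,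
        if_true, if_false, bot_sup_eq]
    · rw [sup_inf_assoc_of_le _ (le_sup_left : p ≤ p ⊔ _), inf_comm _ (p ⊔ _),
        hp.sup_inf_eq_inf_of_le hT hS, inf_comm]
    · rw [hp.sup_inf_eq_inf_of_le hS hT]
    · rw [inf_comm _ (p ⊔ _), hp.sup_inf_eq_inf_of_le hT hS, inf_comm]

noncomputable def selectHom {P : List L} (h : IndepOver P ⊥) : LatticeHom (Set ℕ) L where
  toFun := select P
  map_sup' := select_union P
  map_inf' := h.select_inter

end Selection

section Greedy

variable {L : Type*} [Lattice L] [BoundedOrder L] [IsModularLattice L] [ComplementedLattice L]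

noncomputable def greedyPart (a w p : L) : L :=
  (IsModularLattice.exists_disjoint_and_sup_eq (inf_le_right : (w ⊔ a) ⊓ p ≤ p)).choose

variable (a w p : L)

lemma disjoint_greedyPart : Disjoint ((w ⊔ a) ⊓ p) (greedyPart a w p) :=
  (IsModularLattice.exists_disjoint_and_sup_eq (inf_le_right : (w ⊔ a) ⊓ p ≤ p)).choose_spec.1

lemma inf_sup_greedyPart : (w ⊔ a) ⊓ p ⊔ greedyPart a w p = p :=
  (IsModularLattice.exists_disjoint_and_sup_eq (inf_le_right : (w ⊔ a) ⊓ p ≤ p)).choose_spec.2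

lemma greedyPart_le : greedyPart a w p ≤ p :=
  le_sup_right.trans_eq (inf_sup_greedyPart a w p)

lemma disjoint_greedyPart_sup : Disjoint (greedyPart a w p) (w ⊔ a) := by
  rw [disjoint_iff_inf_le, ← (disjoint_greedyPart a w p).eq_bot]
  exact le_inf (le_inf inf_le_right (inf_le_left.trans (greedyPart_le a w p))) inf_le_left

variable {a w p}

lemma greedyPart_of_disjoint (h : Disjoint p (w ⊔ a)) : greedyPart a w p = p := by
  simpa [h.symm.eq_bot] using inf_sup_greedyPart a w p

lemma greedyPart_of_le (h : p ≤ w ⊔ a) : greedyPart a w p = ⊥ := by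
  have hp : (w ⊔ a) ⊓ p = p := inf_eq_right.2 h
  exact (disjoint_greedyPart a w p).eq_bot_of_ge ((greedyPart_le a w p).trans_eq hp.symm)

variable (a)

noncomputable def greedyCompl : List L → L → L
  | [], _ => ⊥
  | p :: P, w => greedyPart a w p ⊔ greedyCompl P (w ⊔ greedyPart a w p)

/-- Piece number `i` of `P` is split into the pieces number `2 * i` and `2 * i + 1`. -/
noncomputable def refinePieces : List L → L → List L
  | [], _ => []
  | p :: P, w => greedyPart a w p :: (w ⊔ a) ⊓ p :: refinePieces P (w ⊔ greedyPart a w p)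

lemma disjoint_greedyCompl (P : List L) (w : L) : Disjoint (greedyCompl a P w) (w ⊔ a) := by
  induction P generalizing w with
  | nil => exact disjoint_bot_left
  | cons p P ih =>
    rw [greedyCompl, sup_comm]
    exact (disjoint_greedyPart_sup a w p).disjoint_sup_left_of_disjoint_sup_right
      ((ih _).mono_right (le_of_eq (by ac_rfl)))

lemma listSup_le_greedyCompl_sup (P : List L) (w : L) :
    listSup P ≤ greedyCompl a P w ⊔ w ⊔ a := by
  induction P generalizing w with
  | nil => exact bot_le
  | cons p P ih =>
    have hp : p ≤ greedyPart a w p ⊔ (w ⊔ a) := by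
      conv_lhs => rw [← inf_sup_greedyPart a w p]
      exact sup_le (inf_le_left.trans le_sup_right) le_sup_left
    have hP := ih (w ⊔ greedyPart a w p)
    rw [listSup_cons, greedyCompl]
    order

lemma listSup_refinePieces (P : List L) (w : L) : listSup (refinePieces a P w) = listSup P := by
  induction P generalizing w with
  | nil => rfl
  | cons p P ih =>
    rw [refinePieces, listSup_cons, listSup_cons, ih, ← sup_assoc, sup_comm (greedyPart a w p),
      inf_sup_greedyPart, listSup_cons]

lemma IndepOver.refinePieces {P : List L} {s : L} (h : IndepOver P s) (w : L) :
    IndepOver (refinePieces a P w) s := by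
  induction P generalizing s w with
  | nil => trivial
  | cons p P ih =>
    obtain ⟨hp, hP⟩ := h
    have hsplit : greedyPart a w p ⊔ (w ⊔ a) ⊓ p = p := by rw [sup_comm, inf_sup_greedyPart]
    have hdis : Disjoint (greedyPart a w p) ((w ⊔ a) ⊓ p) := (disjoint_greedyPart a w p).symm
    refine ⟨?_, ?_, ?_⟩
    · rw [listSup_cons, listSup_refinePieces]
      exact (hdis.disjoint_sup_right_of_disjoint_sup_left (hsplit ▸ hp)).mono_right
        (le_of_eq (by ac_rfl))
    · rw [listSup_refinePieces]
      exact (hdis.symm.disjoint_sup_right_of_disjoint_sup_left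
        (inf_sup_greedyPart a w p ▸ hp)).mono_right (le_of_eq (by ac_rfl))
    · rw [sup_assoc, hsplit]
      exact ih hP _

lemma preimage_succ_succ_half (S : Set ℕ) :
    (· + 1) ⁻¹' ((· + 1) ⁻¹' ((· / 2) ⁻¹' S)) = (· / 2) ⁻¹' ((· + 1) ⁻¹' S) := by
  ext n
  simp only [mem_preimage]
  rw [show (n + 1 + 1) / 2 = n / 2 + 1 by omega]

lemma preimage_succ_succ_even : (· + 1) ⁻¹' ((· + 1) ⁻¹' {n : ℕ | Even n}) = {n | Even n} := by
  ext n
  simp [parity_simps]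

lemma select_refinePieces_half (P : List L) (w : L) (S : Set ℕ) :
    select (refinePieces a P w) ((· / 2) ⁻¹' S) = select P S := by
  induction P generalizing w S with
  | nil => rfl
  | cons p P ih =>
    rw [refinePieces]
    by_cases h0 : 0 ∈ S
    · rw [select_cons_of_mem (show 0 ∈ (· / 2) ⁻¹' S from h0),
        select_cons_of_mem (show 0 ∈ (· + 1) ⁻¹' ((· / 2) ⁻¹' S) from h0),
        preimage_succ_succ_half, ih, select_cons_of_mem h0, ← sup_assoc,
        sup_comm (greedyPart a w p), inf_sup_greedyPart]
    · rw [select_cons_of_notMem (show 0 ∉ (· / 2) ⁻¹' S from h0),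
        select_cons_of_notMem (show 0 ∉ (· + 1) ⁻¹' ((· / 2) ⁻¹' S) from h0),
        preimage_succ_succ_half, ih, select_cons_of_notMem h0]

lemma select_refinePieces_even (P : List L) (w : L) :
    select (refinePieces a P w) {n | Even n} = greedyCompl a P w := by
  induction P generalizing w with
  | nil => rfl
  | cons p P ih =>
    rw [refinePieces, select_cons_of_mem (show 0 ∈ {n : ℕ | Even n} from Even.zero),
      select_cons_of_notMem (show 0 ∉ (· + 1) ⁻¹' {n : ℕ | Even n} by simp),
      preimage_succ_succ_even, ih, greedyCompl]

variable {a}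

/-- `GreedySel x P S w`: every piece of `P` that `S` drops lies below `x` joined with `w` and the
pieces that `S` keeps before it. -/
inductive GreedySel (x : L) : List L → Set ℕ → L → Prop
  | nil (S : Set ℕ) (w : L) : GreedySel x [] S w
  | keep {p : L} {P : List L} {S : Set ℕ} {w : L} (h0 : 0 ∈ S) :
      GreedySel x P ((· + 1) ⁻¹' S) (w ⊔ p) → GreedySel x (p :: P) S w
  | drop {p : L} {P : List L} {S : Set ℕ} {w : L} (h0 : 0 ∉ S) (hp : p ≤ x ⊔ w) :
      GreedySel x P ((· + 1) ⁻¹' S) w → GreedySel x (p :: P) S w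

variable (a) in
lemma greedySel_refinePieces_even (P : List L) (w : L) :
    GreedySel a (refinePieces a P w) {n | Even n} w := by
  induction P generalizing w with
  | nil => exact .nil _ _
  | cons p P ih =>
    refine .keep Even.zero (.drop (by simp) ?_ ?_)
    · exact inf_le_left.trans (sup_le (le_sup_left.trans le_sup_right) le_sup_left)
    · rw [preimage_succ_succ_even]
      exact ih _

lemma GreedySel.refinePieces {x : L} {P : List L} {S : Set ℕ} {v : L} (h : GreedySel x P S v)
    (w : L) : GreedySel x (refinePieces a P w) ((· / 2) ⁻¹' S) v := by
  induction h generalizing w with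
  | nil => exact .nil _ _
  | @keep p P S v h0 _ ih =>
    refine .keep h0 (.keep h0 ?_)
    rw [preimage_succ_succ_half, sup_assoc, sup_comm (greedyPart a w p), inf_sup_greedyPart]
    exact ih _
  | @drop p P S v h0 hp _ ih =>
    refine .drop h0 ((greedyPart_le a w p).trans hp) (.drop h0 (inf_le_right.trans hp) ?_)
    rw [preimage_succ_succ_half]
    exact ih _

lemma GreedySel.greedyCompl_le_select {x : L} (hxa : x ≤ a) {P : List L} {S : Set ℕ} {w : L}
    (h : GreedySel x P S w) {v : L} (hw : w ≤ v ⊔ a) : greedyCompl a P v ≤ select P S := by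
  induction h generalizing v with
  | nil => exact bot_le
  | @keep p P S w h0 _ ih =>
    have hp : p ≤ v ⊔ greedyPart a v p ⊔ a := by
      conv_lhs => rw [← inf_sup_greedyPart a v p]
      exact sup_le (inf_le_left.trans (by order)) (by order)
    rw [greedyCompl, select_cons_of_mem h0]
    exact sup_le_sup (greedyPart_le a v p) (ih (sup_le (hw.trans (by order)) hp))
  | @drop p P S w h0 hp _ ih =>
    rw [greedyCompl, greedyPart_of_le (hp.trans (sup_le (hxa.trans le_sup_right) hw)),
      select_cons_of_notMem h0, bot_sup_eq, sup_bot_eq]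
    exact ih hw

lemma GreedySel.select_le_greedyCompl {x : L} {P : List L} {S : Set ℕ} {w : L}
    (h : GreedySel x P S w) {v : L} (hind : IndepOver P w) (hdis : Disjoint (w ⊔ select P S) x)
    (hv : v ⊔ a ≤ x ⊔ w) : select P S ≤ greedyCompl a P v := by
  induction h generalizing v with
  | nil => exact bot_le
  | @keep p P S w h0 _ ih =>
    rw [select_cons_of_mem h0] at hdis ⊢
    have hpx : Disjoint p (w ⊔ x) :=
      (hind.1.mono_right le_sup_left).disjoint_sup_right_of_disjoint_sup_left
        (hdis.mono_left (by order))
    have hg : greedyPart a v p = p :=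
      greedyPart_of_disjoint (hpx.mono_right (hv.trans_eq (sup_comm x w)))
    rw [greedyCompl, hg]
    exact sup_le_sup_left (ih hind.2 (hdis.mono_left (le_of_eq (by ac_rfl))) (by order)) p
  | @drop p P S w h0 hp _ ih =>
    rw [select_cons_of_notMem h0] at hdis ⊢
    have hg := (greedyPart_le a v p).trans hp
    exact (ih (hind.2.mono le_sup_left) hdis (by order)).trans le_sup_right

end Greedy

section Stages

variable {L : Type*} [Lattice L] [BoundedOrder L] [IsModularLattice L] [ComplementedLattice L]
  (e : ℕ → L)

noncomputable def pieces : ℕ → List L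
  | 0 => [⊤]
  | n + 1 => refinePieces (e n) (pieces n) ⊥

noncomputable def value (n : ℕ) : L := greedyCompl (e n) (pieces e n) ⊥

lemma indepOver_pieces (n : ℕ) : IndepOver (pieces e n) ⊥ := by
  induction n with
  | zero => exact ⟨disjoint_bot_right.mono_right (by simp), trivial⟩
  | succ n ih => exact ih.refinePieces _ _

lemma listSup_pieces (n : ℕ) : listSup (pieces e n) = ⊤ := by
  induction n with
  | zero => simp [pieces]
  | succ n ih => rw [pieces, listSup_refinePieces, ih]

lemma isCompl_value (n : ℕ) : IsCompl (e n) (value e n) := by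
  refine ⟨by simpa [value] using (disjoint_greedyCompl (e n) (pieces e n) ⊥).symm, ?_⟩
  rw [codisjoint_iff, eq_top_iff, ← listSup_pieces e n, sup_comm]
  simpa [value] using listSup_le_greedyCompl_sup (e n) (pieces e n) ⊥

lemma exists_greedySel_value {k n : ℕ} (hkn : k < n) :
    ∃ S, GreedySel (e k) (pieces e n) S ⊥ ∧ select (pieces e n) S = value e k := by
  induction n with
  | zero => exact absurd hkn (Nat.not_lt_zero k)
  | succ n ih =>
    rcases Nat.lt_succ_iff_lt_or_eq.1 hkn with hk | rfl
    · obtain ⟨S, hS, hval⟩ := ih hk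
      exact ⟨_, hS.refinePieces _, (select_refinePieces_half _ _ _ S).trans hval⟩
    · exact ⟨_, greedySel_refinePieces_even _ _ _, select_refinePieces_even _ _ _⟩

lemma value_anti {k l : ℕ} (h : e k ≤ e l) : value e l ≤ value e k := by
  rcases lt_trichotomy k l with hkl | rfl | hlk
  · obtain ⟨S, hS, hval⟩ := exists_greedySel_value e hkl
    exact hval ▸ hS.greedyCompl_le_select h bot_le
  · exact le_rfl
  · obtain ⟨S, hS, hval⟩ := exists_greedySel_value e hlk
    refine hval ▸ hS.select_le_greedyCompl (indepOver_pieces e k) ?_ (by simpa using h)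
    simpa [hval] using (isCompl_value e l).disjoint.symm

lemma monotone_range_select_pieces : Monotone fun n ↦ range (select (pieces e n)) :=
  monotone_nat_of_le_succ fun n ↦ by
    rintro _ ⟨S, rfl⟩
    exact ⟨_, select_refinePieces_half _ _ _ S⟩

lemma eventually_mem_range_select {y : L} (hy : y ∈ ⋃ n, range (select (pieces e n))) :
    ∀ᶠ n in atTop, y ∈ range (select (pieces e n)) := by
  obtain ⟨n, hn⟩ := mem_iUnion.1 hy
  exact eventually_atTop.2 ⟨n, fun m hm ↦ monotone_range_select_pieces e hm hn⟩

noncomputable def selectSublattice : Sublattice L where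
  carrier := ⋃ n, range (select (pieces e n))
  supClosed' y hy z hz := by
    obtain ⟨n, ⟨S, rfl⟩, ⟨T, rfl⟩⟩ :=
      ((eventually_mem_range_select e hy).and (eventually_mem_range_select e hz)).exists
    exact mem_iUnion.2 ⟨n, S ∪ T, select_union _ S T⟩
  infClosed' y hy z hz := by
    obtain ⟨n, ⟨S, rfl⟩, ⟨T, rfl⟩⟩ :=
      ((eventually_mem_range_select e hy).and (eventually_mem_range_select e hz)).exists
    exact mem_iUnion.2 ⟨n, S ∩ T, (indepOver_pieces e n).select_inter S T⟩

lemma value_mem_selectSublattice (k : ℕ) : value e k ∈ selectSublattice e :=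
  mem_iUnion.2 ⟨k + 1, (exists_greedySel_value e k.lt_succ_self).imp fun _ ↦ And.right⟩

lemma inf_sup_left_of_mem_selectSublattice {x y z : L} (hx : x ∈ selectSublattice e)
    (hy : y ∈ selectSublattice e) (hz : z ∈ selectSublattice e) :
    x ⊓ (y ⊔ z) = x ⊓ y ⊔ x ⊓ z := by
  obtain ⟨n, hxn, hyn, hzn⟩ := ((eventually_mem_range_select e hx).and
    ((eventually_mem_range_select e hy).and (eventually_mem_range_select e hz))).exists
  exact (selectHom (indepOver_pieces e n)).inf_sup_left_of_mem_range hxn hyn hzn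

lemma isCompl_select_pieces_compl (n : ℕ) (S : Set ℕ) :
    IsCompl (select (pieces e n) Sᶜ) (select (pieces e n) S) := by
  constructor
  · rw [disjoint_iff, ← (indepOver_pieces e n).select_inter, compl_inter_self, select_empty]
  · rw [codisjoint_iff, ← select_union, compl_union_self, select_univ, listSup_pieces]

lemma selectSublattice_subset_range {f : L → L} (hcompl : ∀ x, IsCompl x (f x))
    (hmem : ∀ x, f x ∈ selectSublattice e) : (selectSublattice e : Set L) ⊆ range f := by
  intro y hy
  obtain ⟨n, S, rfl⟩ := mem_iUnion.1 hy
  set z := select (pieces e n) Sᶜ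
  have hz : z ∈ selectSublattice e := mem_iUnion.2 ⟨n, Sᶜ, rfl⟩
  obtain ⟨m, hzm, hym, hfm⟩ := ((eventually_mem_range_select e hz).and
    ((eventually_mem_range_select e hy).and (eventually_mem_range_select e (hmem z)))).exists
  exact ⟨z, ((selectHom (indepOver_pieces e m)).eq_of_isCompl_of_mem_range hzm hym hfm
    (isCompl_select_pieces_compl e n S) (hcompl z)).symm⟩

end Stages

end CountableBanaschewski

open CountableBanaschewski in
/-- Every countable complemented modular lattice has a Banaschewski function whose
range is a Boolean sublattice (with the same bounds). -/
theorem stmt_11 {L : Type*} [Lattice L] [BoundedOrder L] [IsModularLattice L]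
    [ComplementedLattice L] [Countable L] :
    ∃ f : L → L, Antitone f ∧ (∀ x : L, x ⊔ f x = ⊤) ∧ (∀ x : L, x ⊓ f x = ⊥) ∧
      (⊥ ∈ Set.range f) ∧ (⊤ ∈ Set.range f) ∧
      (∀ a ∈ Set.range f, ∀ b ∈ Set.range f, a ⊔ b ∈ Set.range f) ∧
      (∀ a ∈ Set.range f, ∀ b ∈ Set.range f, a ⊓ b ∈ Set.range f) ∧
      (∀ a ∈ Set.range f, ∀ b ∈ Set.range f, ∀ c ∈ Set.range f,
        a ⊓ (b ⊔ c) = (a ⊓ b) ⊔ (a ⊓ c)) ∧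
      (∀ a ∈ Set.range f, ∃ b ∈ Set.range f, a ⊔ b = ⊤ ∧ a ⊓ b = ⊥) := by
  obtain ⟨e, he⟩ := exists_surjective_nat L
  set f := value e ∘ Function.surjInv he
  have hcompl (x : L) : IsCompl x (f x) := by
    simpa [f, Function.surjInv_eq he x] using isCompl_value e (Function.surjInv he x)
  have hmem (x : L) : f x ∈ selectSublattice e := value_mem_selectSublattice e _
  have hrange : range f = selectSublattice e :=
    (range_subset_iff.2 hmem).antisymm (selectSublattice_subset_range e hcompl hmem)
  refine ⟨f, fun x y hxy ↦ value_anti e (by simpa [Function.surjInv_eq he] using hxy),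
    fun x ↦ (hcompl x).sup_eq_top, fun x ↦ (hcompl x).inf_eq_bot,
    ⟨⊤, by simpa using (hcompl ⊤).inf_eq_bot⟩, ⟨⊥, by simpa using (hcompl ⊥).sup_eq_top⟩,
    ?_, ?_, ?_,
    fun a _ ↦ ⟨f a, mem_range_self a, (hcompl a).sup_eq_top, (hcompl a).inf_eq_bot⟩⟩
  all_goals simp only [hrange, SetLike.mem_coe]
  · exact fun a ha b hb ↦ (selectSublattice e).sup_mem ha hb
  · exact fun a ha b hb ↦ (selectSublattice e).inf_mem ha hb
  · exact fun a ha b hb c hc ↦ inf_sup_left_of_mem_selectSublattice e ha hb hc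
end

section
/- Every sectionally complemented modular lattice with a countable cofinal subset has a Banaschewski trace. Concretely: if L is a sectionally complemented modular lattice with an increasing cofinal sequence (e_n)_{n<ω} with e_0 = 0, choose a_n with e_n ⊕ a_n = e_{n+1} and set a_m^n = ⊕_{m ≤ i < n} a_i; then (a_m^n)_{m ≤ n < ω} satisfies a_i^k = a_i^j ⊕ a_j^k for all i ≤ j ≤ k and {a_0^n : n < ω} is cofinal in L. -/
/-- A sectionally complemented modular lattice with a countable increasing cofinal
sequence `(e n)` with `e 0 = ⊥` has a Banaschewski trace: choosing `a n` with
`e n ⊕ a n = e (n+1)` and setting `a_m^n = ⊕_{m ≤ i < n} a i`, the family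
`(a_m^n)_{m ≤ n}` satisfies `a_i^k = a_i^j ⊕ a_j^k` for `i ≤ j ≤ k`, and
`{a_0^n : n}` is cofinal in `L`. -/
theorem stmt_15 {L : Type*} [Lattice L] [OrderBot L] [IsModularLattice L]
    (hsc : ∀ x y : L, x ≤ y → ∃ z : L, x ⊓ z = ⊥ ∧ x ⊔ z = y)
    (e : ℕ → L) (hmono : Monotone e) (he0 : e 0 = ⊥)
    (hcof : ∀ x : L, ∃ n : ℕ, x ≤ e n)
    (a : ℕ → L) (ha : ∀ n : ℕ, e n ⊓ a n = ⊥ ∧ e n ⊔ a n = e (n + 1)) :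
    (∀ i j k : ℕ, i ≤ j → j ≤ k →
      (Finset.Ico i k).sup a = (Finset.Ico i j).sup a ⊔ (Finset.Ico j k).sup a ∧
      (Finset.Ico i j).sup a ⊓ (Finset.Ico j k).sup a = ⊥) ∧
    (∀ x : L, ∃ n : ℕ, x ≤ (Finset.Ico 0 n).sup a) := by
  have key : ∀ m n : ℕ, m ≤ n →
      e m ⊔ (Finset.Ico m n).sup a = e n ∧ e m ⊓ (Finset.Ico m n).sup a = ⊥ := by
    intro m n hmn
    induction hmn with
    | refl => simp
    | @step n h ih =>
      have hins : Finset.Ico m (n + 1) = insert n (Finset.Ico m n) :=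
        Nat.Ico_succ_right_eq_insert_Ico h
      have hsub : (Finset.Ico m n).sup a ≤ e n := by
        rw [← ih.1]; exact le_sup_right
      constructor
      · rw [hins, Finset.sup_insert, sup_comm (a n) _, ← sup_assoc, ih.1, (ha n).2]
      · rw [hins, Finset.sup_insert, sup_comm (a n) _]
        have h1 : ((Finset.Ico m n).sup a ⊔ a n) ⊓ e n = (Finset.Ico m n).sup a := by
          rw [inf_comm, sup_comm, ← inf_sup_assoc_of_le _ hsub, (ha n).1, bot_sup_eq]
        calc e m ⊓ ((Finset.Ico m n).sup a ⊔ a n)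
            = e m ⊓ (((Finset.Ico m n).sup a ⊔ a n) ⊓ e n) := by
              rw [inf_comm _ (e n), ← inf_assoc, inf_eq_left.mpr (hmono h)]
          _ = ⊥ := by rw [h1, ih.2]
  constructor
  · intro i j k hij hjk
    constructor
    · rw [← Finset.sup_union, Finset.Ico_union_Ico_eq_Ico hij hjk]
    · have h1 : (Finset.Ico i j).sup a ≤ e j := by
        rw [← (key i j hij).1]; exact le_sup_right
      have h2 : (Finset.Ico i j).sup a ⊓ (Finset.Ico j k).sup a ≤
          e j ⊓ (Finset.Ico j k).sup a := inf_le_inf_right _ h1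
      rw [(key j k hjk).2] at h2
      exact le_bot_iff.mp h2
  · intro x
    obtain ⟨n, hn⟩ := hcof x
    refine ⟨n, ?_⟩
    have := (key 0 n (Nat.zero_le n)).1
    rw [he0, bot_sup_eq] at this
    rw [this]; exact hn
end

section
/- Every countable sectionally complemented modular lattice L admits a Banaschewski measure: a map ⊖ : {(x, y) ∈ L × L : x ≤ y} → L, isotone in y and antitone in x, such that y = x ⊕ (y ⊖ x) for all x ≤ y. -/
set_option linter.unusedSectionVars false

namespace Stmt16Aux

section Comb
variable {L : Type*} [Lattice L] [OrderBot L] [IsModularLattice L]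

/-- The key modular-lattice combination lemma: complements combine over a
decomposition `t = a ⊕ c`. -/
theorem comb {a c t x z₁ z₂ : L} (hac : a ⊓ c = ⊥) (hact : a ⊔ c = t) (hx : x ≤ t)
    (h1m : (x ⊓ a) ⊓ z₁ = ⊥) (h1j : (x ⊓ a) ⊔ z₁ = a)
    (h2m : ((x ⊔ a) ⊓ c) ⊓ z₂ = ⊥) (h2j : ((x ⊔ a) ⊓ c) ⊔ z₂ = c) :
    x ⊓ (z₁ ⊔ z₂) = ⊥ ∧ x ⊔ (z₁ ⊔ z₂) = t := by
  have hz1a : z₁ ≤ a := le_sup_right.trans h1j.le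
  have hz2c : z₂ ≤ c := le_sup_right.trans h2j.le
  have hat : a ≤ t := le_sup_left.trans hact.le
  have hct : c ≤ t := le_sup_right.trans hact.le
  -- join
  have hxa : a ≤ x ⊔ (z₁ ⊔ z₂) := by
    calc a = (x ⊓ a) ⊔ z₁ := h1j.symm
    _ ≤ x ⊔ (z₁ ⊔ z₂) := sup_le (inf_le_left.trans le_sup_left)
        (le_sup_of_le_right le_sup_left)
  have hxc : c ≤ x ⊔ (z₁ ⊔ z₂) := by
    calc c = ((x ⊔ a) ⊓ c) ⊔ z₂ := h2j.symm
    _ ≤ x ⊔ (z₁ ⊔ z₂) :=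
        sup_le (inf_le_left.trans (sup_le le_sup_left hxa))
          (le_sup_of_le_right le_sup_right)
  have hjoin : x ⊔ (z₁ ⊔ z₂) = t := by
    refine le_antisymm (sup_le hx (sup_le (hz1a.trans hat) (hz2c.trans hct))) ?_
    rw [← hact]; exact sup_le hxa hxc
  -- meet
  have hza : (z₁ ⊔ z₂) ⊓ a = z₁ := by
    rw [sup_inf_assoc_of_le _ hz1a]
    have : z₂ ⊓ a = ⊥ := by
      refine le_bot_iff.mp ?_
      calc z₂ ⊓ a ≤ c ⊓ a := inf_le_inf_right a hz2c
      _ = ⊥ := by rw [inf_comm]; exact hac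
    rw [this, sup_bot_eq]
  set w := x ⊓ (z₁ ⊔ z₂) with hw
  have hwa : w ⊓ a = ⊥ := by
    have h1 : w ⊓ a = x ⊓ z₁ := by rw [hw, inf_assoc, hza]
    have h2 : x ⊓ z₁ = (x ⊓ a) ⊓ z₁ := by
      rw [inf_assoc]
      congr 1
      exact (inf_eq_right.mpr hz1a).symm
    rw [h1, h2, h1m]
  have hwac : (w ⊔ a) ⊓ c = ⊥ := by
    refine le_bot_iff.mp ?_
    have hle1 : (w ⊔ a) ⊓ c ≤ (x ⊔ a) ⊓ c :=
      inf_le_inf_right c (sup_le_sup_right inf_le_left a)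
    have hle2 : (w ⊔ a) ⊓ c ≤ z₂ := by
      have hwz : w ⊔ a ≤ a ⊔ z₂ := by
        refine sup_le ?_ le_sup_left
        calc w ≤ z₁ ⊔ z₂ := inf_le_right
        _ ≤ a ⊔ z₂ := sup_le_sup_right hz1a z₂
      calc (w ⊔ a) ⊓ c ≤ (a ⊔ z₂) ⊓ c := inf_le_inf_right c hwz
      _ = (z₂ ⊔ a) ⊓ c := by rw [sup_comm]
      _ = z₂ ⊔ (a ⊓ c) := sup_inf_assoc_of_le _ hz2c
      _ = z₂ := by rw [hac, sup_bot_eq]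
    calc (w ⊔ a) ⊓ c ≤ ((x ⊔ a) ⊓ c) ⊓ z₂ := le_inf hle1 hle2
    _ = ⊥ := h2m
  have hwla : w ≤ a := by
    have hwt : w ⊔ a ≤ t := sup_le ((inf_le_left (a := x)).trans hx) hat
    have : w ⊔ a = a := by
      have h3 : (a ⊔ c) ⊓ (w ⊔ a) = a ⊔ (c ⊓ (w ⊔ a)) :=
        sup_inf_assoc_of_le _ le_sup_right
      rw [hact] at h3
      have h4 : t ⊓ (w ⊔ a) = w ⊔ a := inf_eq_right.mpr hwt
      rw [h4] at h3
      rw [h3, inf_comm, hwac, sup_bot_eq]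
    calc w ≤ w ⊔ a := le_sup_left
    _ = a := this
  have hmeet : w = ⊥ := by
    have : w = w ⊓ a := (inf_eq_left.mpr hwla).symm
    rw [this, hwa]
  exact ⟨hmeet, hjoin⟩

end Comb

/-- Binary refinement trees used to build Banaschewski functions lazily. -/
inductive MTree (L : Type*) : Type _
  | lf : L → MTree L
  | nd : L → L → L → MTree L → MTree L → MTree L

namespace MTree

variable {L : Type*}

def top : MTree L → L
  | lf t => t
  | nd t _ _ _ _ => t

section Defs
variable [Lattice L] [OrderBot L] [IsModularLattice L]

open Classical in
noncomputable def ins (σ : L → L → L) : MTree L → L → MTree L × L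
  | lf t, x =>
      if x = t then (lf t, ⊥)
      else (nd t x (σ x t) (lf x) (lf (σ x t)), σ x t)
  | nd t a c l r, x =>
      (nd t a c (ins σ l (x ⊓ a)).1 (ins σ r ((x ⊔ a) ⊓ c)).1,
        (ins σ l (x ⊓ a)).2 ⊔ (ins σ r ((x ⊔ a) ⊓ c)).2)

def wf : MTree L → Prop
  | lf _ => True
  | nd t a c l r => a ⊓ c = ⊥ ∧ a ⊔ c = t ∧ l.top = a ∧ r.top = c ∧ wf l ∧ wf r

def Res : MTree L → L → Prop
  | lf t, x => x = t ∨ x = ⊥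
  | nd _ a c l r, x => Res l (x ⊓ a) ∧ Res r ((x ⊔ a) ⊓ c)

variable (σ : L → L → L)

open Classical in
theorem ins_lf (t x : L) :
    ins σ (lf t) x =
      if x = t then (lf t, ⊥)
      else (nd t x (σ x t) (lf x) (lf (σ x t)), σ x t) := rfl

theorem ins_nd (t a c : L) (l r : MTree L) (x : L) :
    ins σ (nd t a c l r) x =
      (nd t a c (ins σ l (x ⊓ a)).1 (ins σ r ((x ⊔ a) ⊓ c)).1,
        (ins σ l (x ⊓ a)).2 ⊔ (ins σ r ((x ⊔ a) ⊓ c)).2) := rfl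

variable (hm : ∀ x t : L, x ≤ t → x ⊓ σ x t = ⊥) (hj : ∀ x t : L, x ≤ t → x ⊔ σ x t = t)

include hj in
theorem sigma_bot (t : L) : σ ⊥ t = t := by
  have := hj ⊥ t bot_le; simpa using this

theorem ins_top (T : MTree L) (x : L) : (ins σ T x).1.top = T.top := by
  induction T with
  | lf t => by_cases h : x = t <;> simp [ins_lf, h, top]
  | nd t a c l r ihl ihr => simp [ins_nd, top]

include hm hj in
theorem ins_wf (T : MTree L) (x : L) (hT : wf T) (hx : x ≤ T.top) : wf (ins σ T x).1 := by
  induction T generalizing x with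
  | lf t =>
      simp only [top] at hx
      by_cases h : x = t
      · simpa [ins_lf, h] using hT
      · simp only [ins_lf, h, if_false]
        exact ⟨hm x t hx, hj x t hx, rfl, rfl, trivial, trivial⟩
  | nd t a c l r ihl ihr =>
      obtain ⟨h1, h2, h3, h4, h5, h6⟩ := hT
      refine ⟨h1, h2, ?_, ?_, ?_, ?_⟩
      · rw [ins_top]; exact h3
      · rw [ins_top]; exact h4
      · exact ihl _ h5 (by rw [h3]; exact inf_le_right)
      · exact ihr _ h6 (by rw [h4]; exact inf_le_right)

include hm hj in
theorem ins_compl (T : MTree L) (x : L) (hT : wf T) (hx : x ≤ T.top) :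
    x ⊓ (ins σ T x).2 = ⊥ ∧ x ⊔ (ins σ T x).2 = T.top := by
  induction T generalizing x with
  | lf t =>
      simp only [top] at hx ⊢
      by_cases h : x = t
      · subst h; simp [ins_lf, top]
      · simp only [ins_lf, h, if_false, top]
        exact ⟨hm x t hx, hj x t hx⟩
  | nd t a c l r ihl ihr =>
      obtain ⟨h1, h2, h3, h4, h5, h6⟩ := hT
      have hl := ihl (x ⊓ a) h5 (by rw [h3]; exact inf_le_right)
      have hr := ihr ((x ⊔ a) ⊓ c) h6 (by rw [h4]; exact inf_le_right)
      rw [h3] at hl; rw [h4] at hr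
      exact Stmt16Aux.comb h1 h2 (by simpa [top] using hx) hl.1 hl.2 hr.1 hr.2

include hm hj in
theorem ins_val_le (T : MTree L) (x : L) (hT : wf T) (hx : x ≤ T.top) :
    (ins σ T x).2 ≤ T.top :=
  le_sup_right.trans (ins_compl σ hm hj T x hT hx).2.le

include hj in
theorem ins_bot (T : MTree L) (hT : wf T) : (ins σ T ⊥).2 = T.top := by
  induction T with
  | lf t =>
      by_cases h : (⊥ : L) = t
      · subst h; simp [ins_lf, top]
      · simp [ins_lf, h, sigma_bot σ hj, top]
  | nd t a c l r ihl ihr =>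
      obtain ⟨h1, h2, h3, h4, h5, h6⟩ := hT
      have hbl : (⊥ : L) ⊓ a = ⊥ := bot_inf_eq a
      have hbr : ((⊥ : L) ⊔ a) ⊓ c = ⊥ := by rw [bot_sup_eq]; exact h1
      simp only [ins_nd, hbl, hbr]
      rw [ihl h5, ihr h6, h3, h4, h2]
      rfl

include hm in
theorem ins_res_self (T : MTree L) (x : L) (hT : wf T) (hx : x ≤ T.top) :
    Res (ins σ T x).1 x := by
  induction T generalizing x with
  | lf t =>
      simp only [top] at hx
      by_cases h : x = t
      · simp [ins_lf, h, Res]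
      · simp only [ins_lf, h, if_false]
        constructor
        · exact Or.inl (inf_idem x)
        · right
          rw [sup_idem]
          exact hm x t hx
  | nd t a c l r ihl ihr =>
      obtain ⟨h1, h2, h3, h4, h5, h6⟩ := hT
      exact ⟨ihl _ h5 (by rw [h3]; exact inf_le_right),
        ihr _ h6 (by rw [h4]; exact inf_le_right)⟩

include hm hj in
theorem ins_res_pres (T : MTree L) (x y : L) (hT : wf T) (hy : y ≤ T.top)
    (hx : Res T x) : Res (ins σ T y).1 x := by
  induction T generalizing x y with
  | lf t =>
      simp only [top] at hy
      by_cases h : y = t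
      · simpa [ins_lf, h] using hx
      · simp only [ins_lf, h, if_false]
        have hct : σ y t ≤ t := le_sup_right.trans (hj y t hy).le
        rcases hx with h' | h'
        · rw [h']
          constructor
          · left
            rw [inf_comm]
            exact inf_eq_left.mpr hy
          · left
            rw [sup_comm, sup_eq_right.mpr hy]
            exact inf_eq_right.mpr hct
        · rw [h']
          exact ⟨Or.inr (bot_inf_eq y), Or.inr (by rw [bot_sup_eq]; exact hm y t hy)⟩
  | nd t a c l r ihl ihr =>
      obtain ⟨h1, h2, h3, h4, h5, h6⟩ := hT
      exact ⟨ihl _ _ h5 (by rw [h3]; exact inf_le_right) hx.1,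
        ihr _ _ h6 (by rw [h4]; exact inf_le_right) hx.2⟩

include hm hj in
theorem ins_val_pres (T : MTree L) (x y : L) (hT : wf T) (hy : y ≤ T.top)
    (hx : Res T x) : (ins σ (ins σ T y).1 x).2 = (ins σ T x).2 := by
  induction T generalizing x y with
  | lf t =>
      simp only [top] at hy
      by_cases h : y = t
      · simp [ins_lf, h]
      · have hct : σ y t ≤ t := le_sup_right.trans (hj y t hy).le
        rcases hx with h' | h'
        · -- x = t : both values are ⊥
          rw [h']
          have e1 : t ⊓ y = y := inf_eq_right.mpr hy
          have e2 : (t ⊔ y) ⊓ σ y t = σ y t := by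
            rw [sup_comm, sup_eq_right.mpr hy]
            exact inf_eq_right.mpr hct
          simp [ins_lf, ins_nd, h, e1, e2]
        · -- x = ⊥ : both values are the top t
          rw [h']
          have w1 : wf (ins σ (lf t) y).1 := ins_wf σ hm hj (lf t) y trivial hy
          rw [ins_bot σ hj _ w1, ins_bot σ hj (lf t) trivial, ins_top]
  | nd t a c l r ihl ihr =>
      obtain ⟨h1, h2, h3, h4, h5, h6⟩ := hT
      simp only [ins_nd]
      rw [ihl _ _ h5 (by rw [h3]; exact inf_le_right) hx.1,
        ihr _ _ h6 (by rw [h4]; exact inf_le_right) hx.2]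

theorem ins_val_anti (T : MTree L) (x x' : L) (hT : wf T) (hxx : x ≤ x')
    (hx' : x' ≤ T.top) (hrx : Res T x) (hrx' : Res T x') :
    (ins σ T x').2 ≤ (ins σ T x).2 := by
  induction T generalizing x x' with
  | lf t =>
      rcases hrx' with h' | h'
      · rw [h']; simp [ins_lf]
      · rw [h']
        have hxb : x = ⊥ := le_bot_iff.mp (h' ▸ hxx)
        rw [hxb]
  | nd t a c l r ihl ihr =>
      obtain ⟨h1, h2, h3, h4, h5, h6⟩ := hT
      simp only [ins_nd]
      exact sup_le_sup
        (ihl _ _ h5 (inf_le_inf_right a hxx) (by rw [h3]; exact inf_le_right) hrx.1 hrx'.1)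
        (ihr _ _ h6 (inf_le_inf_right c (sup_le_sup_right hxx a))
          (by rw [h4]; exact inf_le_right) hrx.2 hrx'.2)

end Defs

end MTree

section Chain

open MTree

variable {L : Type*} [Lattice L] [OrderBot L] [IsModularLattice L]
variable (σ : L → L → L) (a : ℕ → L)

/-- The increasing tree built over the interval `[⊥, u]`, inserting `a 0 ⊓ u`,
`a 1 ⊓ u`, ... successively. -/
noncomputable def ch (u : L) : ℕ → MTree L
  | 0 => .lf u
  | n + 1 => (ins σ (ch u n) (a n ⊓ u)).1

theorem ch_top (u : L) (n : ℕ) : (ch σ a u n).top = u := by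
  induction n with
  | zero => rfl
  | succ n ih => rw [ch, ins_top]; exact ih

variable (hm : ∀ x t : L, x ≤ t → x ⊓ σ x t = ⊥) (hj : ∀ x t : L, x ≤ t → x ⊔ σ x t = t)

include hm hj in
theorem ch_wf (u : L) (n : ℕ) : wf (ch σ a u n) := by
  induction n with
  | zero => trivial
  | succ n ih =>
      exact ins_wf σ hm hj _ _ ih (by rw [ch_top]; exact inf_le_right)

variable (ha : Function.Surjective a)

/-- The Banaschewski function on the interval `[⊥, u]`. -/
noncomputable def Hf (u x : L) : L :=
  (ins σ (ch σ a u ((ha x).choose + 1)) x).2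

include hm hj in
theorem H_stab (u x : L) (hx : x ≤ u) :
    ∀ m, (ha x).choose + 1 ≤ m →
      Res (ch σ a u m) x ∧ (ins σ (ch σ a u m) x).2 = Hf σ a ha u x := by
  have hax : a ((ha x).choose) ⊓ u = x := by
    rw [(ha x).choose_spec]
    exact inf_eq_left.mpr hx
  have hkey : ch σ a u ((ha x).choose + 1) = (ins σ (ch σ a u ((ha x).choose)) x).1 := by
    rw [ch, hax]
  intro m hmap
  induction m, hmap using Nat.le_induction with
  | base =>
      constructor
      · rw [hkey]
        exact ins_res_self σ hm _ x (ch_wf σ a hm hj u _) (by rw [ch_top]; exact hx)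
      · rfl
  | succ m hmge ih =>
      have hwfm : wf (ch σ a u m) := ch_wf σ a hm hj u m
      have hym : a m ⊓ u ≤ (ch σ a u m).top := by rw [ch_top]; exact inf_le_right
      refine ⟨?_, ?_⟩
      · rw [ch]
        exact ins_res_pres σ hm hj _ x _ hwfm hym ih.1
      · rw [ch]
        rw [ins_val_pres σ hm hj _ x _ hwfm hym ih.1]
        exact ih.2

include hm hj in
theorem H_compl (u x : L) (hx : x ≤ u) :
    x ⊓ Hf σ a ha u x = ⊥ ∧ x ⊔ Hf σ a ha u x = u := by
  have h := ins_compl σ hm hj (ch σ a u ((ha x).choose + 1)) x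
    (ch_wf σ a hm hj u _) (by rw [ch_top]; exact hx)
  rwa [ch_top] at h

include hm hj in
theorem H_le (u x : L) (hx : x ≤ u) : Hf σ a ha u x ≤ u :=
  le_sup_right.trans (H_compl σ a hm hj ha u x hx).2.le

include hm hj in
theorem H_anti (u x x' : L) (hxx : x ≤ x') (hx' : x' ≤ u) :
    Hf σ a ha u x' ≤ Hf σ a ha u x := by
  have hx : x ≤ u := hxx.trans hx'
  set m := max ((ha x).choose + 1) ((ha x').choose + 1) with hmdef
  have h1 := H_stab σ a hm hj ha u x hx m (le_max_left _ _)
  have h2 := H_stab σ a hm hj ha u x' hx' m (le_max_right _ _)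
  rw [← h1.2, ← h2.2]
  exact ins_val_anti σ (ch σ a u m) x x' (ch_wf σ a hm hj u m) hxx
    (by rw [ch_top]; exact hx') h1.1 h2.1

include hm hj in
theorem H_bot (u : L) : Hf σ a ha u ⊥ = u := by
  unfold Hf
  rw [ins_bot σ hj _ (ch_wf σ a hm hj u _), ch_top]

/-- The cofinal chain. -/
noncomputable def ee : ℕ → L
  | 0 => a 0
  | n + 1 => ee n ⊔ a (n + 1)

/-- The successive independent pieces. -/
noncomputable def uu : ℕ → L
  | 0 => a 0
  | n + 1 => σ (ee a n) (ee a (n + 1))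

theorem ee_le_succ (n : ℕ) : ee a n ≤ ee a (n + 1) := le_sup_left

theorem ee_mono {n m : ℕ} (h : n ≤ m) : ee a n ≤ ee a m := by
  induction m, h using Nat.le_induction with
  | base => exact le_rfl
  | succ m hmge ih => exact ih.trans (ee_le_succ a m)

theorem a_le_ee {k n : ℕ} (h : k ≤ n) : a k ≤ ee a n := by
  have : a k ≤ ee a k := by
    cases k with
    | zero => exact le_rfl
    | succ k => exact le_sup_right
  exact this.trans (ee_mono a h)

include hm in
theorem uu_inf (n : ℕ) : ee a n ⊓ uu σ a (n + 1) = ⊥ :=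
  hm _ _ (ee_le_succ a n)

include hj in
theorem uu_sup (n : ℕ) : ee a n ⊔ uu σ a (n + 1) = ee a (n + 1) :=
  hj _ _ (ee_le_succ a n)

/-- The tower of Banaschewski functions along the chain. -/
noncomputable def gg : ℕ → L → L
  | 0 => fun x => Hf σ a ha (uu σ a 0) x
  | n + 1 => fun x =>
      gg n (x ⊓ ee a n) ⊔
        Hf σ a ha (uu σ a (n + 1)) ((x ⊔ ee a n) ⊓ uu σ a (n + 1))

include hm hj in
theorem G1 (n : ℕ) (x : L) (hx : x ≤ ee a n) :
    x ⊓ gg σ a ha n x = ⊥ ∧ x ⊔ gg σ a ha n x = ee a n := by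
  induction n generalizing x with
  | zero =>
      have : uu σ a 0 = ee a 0 := rfl
      rw [show gg σ a ha 0 x = Hf σ a ha (uu σ a 0) x from rfl, this]
      exact H_compl σ a hm hj ha _ x hx
  | succ n ih =>
      have h1 := ih (x ⊓ ee a n) inf_le_right
      have h2 := H_compl σ a hm hj ha (uu σ a (n + 1))
        ((x ⊔ ee a n) ⊓ uu σ a (n + 1)) inf_le_right
      exact Stmt16Aux.comb (uu_inf σ a hm n) (uu_sup σ a hj n) hx h1.1 h1.2 h2.1 h2.2

include hm hj in
theorem gg_le (n : ℕ) (x : L) (hx : x ≤ ee a n) : gg σ a ha n x ≤ ee a n :=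
  le_sup_right.trans (G1 σ a hm hj ha n x hx).2.le

include hm hj in
theorem G2 (n : ℕ) (x x' : L) (hxx : x ≤ x') (hx' : x' ≤ ee a n) :
    gg σ a ha n x' ≤ gg σ a ha n x := by
  induction n generalizing x x' with
  | zero => exact H_anti σ a hm hj ha _ x x' hxx hx'
  | succ n ih =>
      exact sup_le_sup
        (ih (x ⊓ ee a n) (x' ⊓ ee a n) (inf_le_inf_right _ hxx) inf_le_right)
        (H_anti σ a hm hj ha _ _ _
          (inf_le_inf_right _ (sup_le_sup_right hxx _)) inf_le_right)

include hm hj in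
theorem G3 (n : ℕ) (x : L) (hx : x ≤ ee a n) :
    gg σ a ha (n + 1) x = gg σ a ha n x ⊔ uu σ a (n + 1) := by
  have e1 : x ⊓ ee a n = x := inf_eq_left.mpr hx
  have e2 : (x ⊔ ee a n) ⊓ uu σ a (n + 1) = ⊥ := by
    rw [sup_eq_right.mpr hx]
    exact uu_inf σ a hm n
  rw [show gg σ a ha (n + 1) x = gg σ a ha n (x ⊓ ee a n) ⊔
      Hf σ a ha (uu σ a (n + 1)) ((x ⊔ ee a n) ⊓ uu σ a (n + 1)) from rfl,
    e1, e2, H_bot σ a hm hj ha]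

include hm hj in
theorem G4 (n m : ℕ) (hnm : n ≤ m) (x : L) (hx : x ≤ ee a n) :
    gg σ a ha m x ⊓ ee a n = gg σ a ha n x := by
  induction m, hnm using Nat.le_induction with
  | base => exact inf_eq_left.mpr (gg_le σ a hm hj ha n x hx)
  | succ m hmge ih =>
      have hxm : x ≤ ee a m := hx.trans (ee_mono a hmge)
      have step : gg σ a ha (m + 1) x ⊓ ee a m = gg σ a ha m x := by
        rw [G3 σ a hm hj ha m x hxm,
          sup_inf_assoc_of_le _ (gg_le σ a hm hj ha m x hxm),
          inf_comm, uu_inf σ a hm m, sup_bot_eq]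
      calc gg σ a ha (m + 1) x ⊓ ee a n
          = gg σ a ha (m + 1) x ⊓ (ee a m ⊓ ee a n) := by
            rw [inf_eq_right.mpr (ee_mono a hmge)]
        _ = (gg σ a ha (m + 1) x ⊓ ee a m) ⊓ ee a n := by rw [inf_assoc]
        _ = gg σ a ha m x ⊓ ee a n := by rw [step]
        _ = gg σ a ha n x := ih

end Chain

end Stmt16Aux

/-- Every countable sectionally complemented modular lattice admits a Banaschewski
measure: a map `(x, y) ↦ y ⊖ x`, defined for `x ≤ y`, isotone in `y`, antitone in
`x`, with `y = x ⊕ (y ⊖ x)`. -/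
theorem stmt_16 {L : Type*} [Lattice L] [OrderBot L] [IsModularLattice L]
    [Countable L]
    (hsc : ∀ x y : L, x ≤ y → ∃ z : L, x ⊓ z = ⊥ ∧ x ⊔ z = y) :
    ∃ m : L → L → L,
      (∀ x y y' : L, x ≤ y → y ≤ y' → m x y ≤ m x y') ∧
      (∀ x x' y : L, x ≤ x' → x' ≤ y → m x' y ≤ m x y) ∧
      (∀ x y : L, x ≤ y → x ⊔ m x y = y ∧ x ⊓ m x y = ⊥) := by
  classical
  obtain ⟨a, ha⟩ := exists_surjective_nat L
  set σ : L → L → L := fun x t => if h : x ≤ t then (hsc x t h).choose else t with hσ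
  have hm : ∀ x t : L, x ≤ t → x ⊓ σ x t = ⊥ := by
    intro x t h
    simp only [hσ, dif_pos h]
    exact (hsc x t h).choose_spec.1
  have hj : ∀ x t : L, x ≤ t → x ⊔ σ x t = t := by
    intro x t h
    simp only [hσ, dif_pos h]
    exact (hsc x t h).choose_spec.2
  have hyee : ∀ y : L, y ≤ Stmt16Aux.ee a ((ha y).choose) := by
    intro y
    conv_lhs => rw [← (ha y).choose_spec]
    exact Stmt16Aux.a_le_ee a le_rfl
  refine ⟨fun x y => Stmt16Aux.gg σ a ha ((ha y).choose) x ⊓ y, ?_, ?_, ?_⟩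
  · -- isotone in y
    intro x y y' hxy hyy'
    show Stmt16Aux.gg σ a ha ((ha y).choose) x ⊓ y ≤
      Stmt16Aux.gg σ a ha ((ha y').choose) x ⊓ y'
    set n := (ha y).choose with hn
    set n' := (ha y').choose with hn'
    set N := max n n' with hN
    have hxen : x ≤ Stmt16Aux.ee a n := hxy.trans (hyee y)
    have hxen' : x ≤ Stmt16Aux.ee a n' := (hxy.trans hyy').trans (hyee y')
    have e1 : Stmt16Aux.gg σ a ha n x ⊓ y = Stmt16Aux.gg σ a ha N x ⊓ y := by
      rw [← Stmt16Aux.G4 σ a hm hj ha n N (le_max_left _ _) x hxen, inf_assoc,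
        inf_eq_right.mpr (hyee y)]
    have e2 : Stmt16Aux.gg σ a ha n' x ⊓ y' = Stmt16Aux.gg σ a ha N x ⊓ y' := by
      rw [← Stmt16Aux.G4 σ a hm hj ha n' N (le_max_right _ _) x hxen', inf_assoc,
        inf_eq_right.mpr (hyee y')]
    rw [e1, e2]
    exact inf_le_inf_left _ hyy'
  · -- antitone in x
    intro x x' y hxx' hx'y
    show Stmt16Aux.gg σ a ha ((ha y).choose) x' ⊓ y ≤
      Stmt16Aux.gg σ a ha ((ha y).choose) x ⊓ y
    exact inf_le_inf_right y
      (Stmt16Aux.G2 σ a hm hj ha _ x x' hxx' (hx'y.trans (hyee y)))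
  · -- complement
    intro x y hxy
    have hxe : x ≤ Stmt16Aux.ee a ((ha y).choose) := hxy.trans (hyee y)
    have h := Stmt16Aux.G1 σ a hm hj ha ((ha y).choose) x hxe
    constructor
    · show x ⊔ Stmt16Aux.gg σ a ha ((ha y).choose) x ⊓ y = y
      rw [← sup_inf_assoc_of_le _ hxy, h.2]
      exact inf_eq_right.mpr (hyee y)
    · show x ⊓ (Stmt16Aux.gg σ a ha ((ha y).choose) x ⊓ y) = ⊥
      rw [← inf_assoc, h.1, bot_inf_eq]
end

section
/- Let S be a unital von Neumann regular ring, let R be a two-sided ideal of S that is itself von Neumann regular, and let g be a Banaschewski function on S. Then for every x ∈ R, the idempotent g(x) belongs to R and satisfies xR = g(x)R; consequently g restricts to a Banaschewski function on R. -/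
/-- Let `S` be a unital von Neumann regular ring, `R` a two-sided ideal of `S`
which is itself von Neumann regular, and `g` a Banaschewski function on `S`. Then
for every `x ∈ R`, the idempotent `g x` belongs to `R` and generates in `R` the
same principal right ideal as `x`; moreover `g` restricts to a Banaschewski
function on `R`. -/
theorem stmt_19 {S : Type*} [Ring S] (hreg : ∀ x : S, ∃ y : S, x * y * x = x)
    (R : AddSubgroup S)
    (hRr : ∀ a ∈ R, ∀ s : S, a * s ∈ R)
    (hRl : ∀ a ∈ R, ∀ s : S, s * a ∈ R)
    (hRreg : ∀ a ∈ R, ∃ b ∈ R, a * b * a = a)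
    (g : S → S) (hgid : ∀ x : S, g x * g x = g x)
    (hgS : ∀ x : S, ∀ z : S, (∃ r : S, z = x * r) ↔ (∃ r : S, z = g x * r))
    (hgant : ∀ x y : S, (∀ z : S, (∃ r : S, z = x * r) → (∃ r : S, z = y * r)) →
      g x = g x * g y ∧ g x = g y * g x) :
    ∀ x ∈ R, g x ∈ R ∧
      (∀ z : S, (∃ r ∈ R, ∃ n : ℤ, z = x * r + n • x) ↔
        (∃ r ∈ R, ∃ n : ℤ, z = g x * r + n • g x)) ∧
      (∀ y ∈ R,
        ({w : S | ∃ r ∈ R, ∃ n : ℤ, w = x * r + n • x} ⊆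
          {w : S | ∃ r ∈ R, ∃ n : ℤ, w = y * r + n • y}) →
        g x = g x * g y ∧ g x = g y * g x) := by
  intro x hx
  obtain ⟨b, hbR, hb⟩ := hRreg x hx
  -- x = g x * t for some t, hence g x * x = x
  obtain ⟨t, ht⟩ := (hgS x x).mp ⟨b * x, by rw [← mul_assoc, hb]⟩
  have hgxx : g x * x = x := by
    have h2 := congrArg (fun s => g x * s) ht
    rw [← mul_assoc, hgid, ← ht] at h2
    exact h2
  -- g x = x * r0 for some r0
  obtain ⟨r0, hr0⟩ := (hgS x (g x)).mpr ⟨g x, (hgid x).symm⟩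
  have hgmem : g x ∈ R := hr0 ▸ hRr x hx r0
  -- g x = x * c with c ∈ R
  set c := b * g x with hc
  have hcR : c ∈ R := hRr b hbR (g x)
  have hgc : g x = x * c := by
    rw [hc, hr0, ← mul_assoc, ← mul_assoc, hb]
  refine ⟨hgmem, ?_, ?_⟩
  · intro z
    constructor
    · rintro ⟨r, hrR, n, rfl⟩
      refine ⟨x * r + n • x, ?_, 0, ?_⟩
      · exact R.add_mem (hRr x hx r) (R.zsmul_mem hx n)
      · rw [mul_add, ← mul_assoc, hgxx, mul_smul_comm, hgxx]
        simp
    · rintro ⟨r, hrR, n, rfl⟩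
      refine ⟨c * r + n • c, ?_, 0, ?_⟩
      · exact R.add_mem (hRr c hcR r) (R.zsmul_mem hcR n)
      · rw [mul_add, ← mul_assoc, ← hgc, mul_smul_comm, ← hgc]
        simp
  · intro y _ hsub
    refine hgant x y ?_
    rintro z ⟨r, rfl⟩
    have hz : x * r ∈ {w : S | ∃ r ∈ R, ∃ n : ℤ, w = x * r + n • x} := by
      refine ⟨b * x * r, hRr (b * x) (hRr b hbR x) r, 0, ?_⟩
      rw [← mul_assoc, ← mul_assoc, hb]
      simp
    obtain ⟨r2, _, n, hz2⟩ := hsub hz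
    refine ⟨r2 + (n : ℤ) • 1, ?_⟩
    rw [mul_add, mul_smul_comm, mul_one, hz2]
end
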